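/- arXiv:1010.0628 — 3 statements merged into one kernel-verified Lean document; each statement's English description precedes it below -/
import Mathlib

section
/- Let A be a real matrix with rows indexed by a finite set V and columns indexed by a finite set W, let X ⊆ V with |X| ≥ 2 and let Y ⊆ W be nonempty. Suppose X₁ ⊆ X with |X₁| > |X|/2 and Y₁ ⊆ Y is nonempty, and that |d_A(X₁,Y₁) − d_A(X,Y)| ≥ ε. Then there exists X₁' ⊆ X₁ with |X₁'| = ⌊|X|/2⌋ such that |d_A(X₁',Y₁) − d_A(X,Y)| ≥ ε. -/
open Finset

/-- `w_A(X,Y)`: the sum of the entries of `A` over the block `X × Y`. -/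
def wSum {V W : Type*} (A : V → W → ℝ) (X : Finset V) (Y : Finset W) : ℝ :=
  ∑ x ∈ X, ∑ y ∈ Y, A x y

/-- `d_A(X,Y)`: the density of the block `X × Y`. -/
noncomputable def dens {V W : Type*} (A : V → W → ℝ) (X : Finset V) (Y : Finset W) : ℝ :=
  wSum A X Y / ((X.card : ℝ) * (Y.card : ℝ))

/-- For every `m ≥ 1` and set `S` of size `m + k` there is an `m`-subset whose
average of `f` is at least the average over `S`. -/
lemma exists_subset_avg_ge {V : Type*} [DecidableEq V] (f : V → ℝ) (m : ℕ) (hm : 0 < m) :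
    ∀ (k : ℕ) (S : Finset V), S.card = m + k →
      ∃ T ⊆ S, T.card = m ∧
        (∑ x ∈ S, f x) / (S.card : ℝ) ≤ (∑ x ∈ T, f x) / (m : ℝ) := by
  intro k
  induction k with
  | zero =>
    intro S hS
    refine ⟨S, Finset.Subset.refl _, by omega, ?_⟩
    rw [hS]; simp
  | succ n ih =>
    intro S hS
    have hSne : S.Nonempty := Finset.card_pos.mp (by omega)
    obtain ⟨x, hxS, hxmin⟩ := S.exists_min_image f hSne
    have hsum : (S.card : ℝ) * f x ≤ ∑ y ∈ S, f y := by
      have := Finset.card_nsmul_le_sum S f (f x) (fun y hy => hxmin y hy)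
      simpa [nsmul_eq_mul] using this
    have hcard : (S.erase x).card = m + n := by
      rw [Finset.card_erase_of_mem hxS]; omega
    obtain ⟨T, hTsub, hTcard, hTavg⟩ := ih (S.erase x) hcard
    refine ⟨T, hTsub.trans (Finset.erase_subset _ _), hTcard, ?_⟩
    have hse : ∑ y ∈ S.erase x, f y = (∑ y ∈ S, f y) - f x :=
      Finset.sum_erase_eq_sub hxS
    have hc1 : (0 : ℝ) < (S.card : ℝ) := by
      have : 0 < S.card := by omega
      exact_mod_cast this
    refine le_trans ?_ hTavg
    rw [hse, hcard]
    have hc2 : (0 : ℝ) < ((m + n : ℕ) : ℝ) := by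
      have : 0 < m + n := by omega
      exact_mod_cast this
    rw [div_le_div_iff₀ hc1 hc2]
    rw [hS] at hsum ⊢
    push_cast at hsum ⊢
    nlinarith [hsum]

/-- **Shrinking an irregular witness.**  Let `X ⊆ V` with `|X| ≥ 2` and `Y ⊆ W` be
nonempty.  Suppose `X₁ ⊆ X` with `|X₁| > |X|/2`, `Y₁ ⊆ Y` is nonempty, and
`|d_A(X₁,Y₁) − d_A(X,Y)| ≥ ε`.  Then there exists `X₁' ⊆ X₁` with `|X₁'| = ⌊|X|/2⌋` and
`|d_A(X₁',Y₁) − d_A(X,Y)| ≥ ε`. -/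
theorem shrink_irregular_witness {V W : Type*} (A : V → W → ℝ) (ε : ℝ)
    (X : Finset V) (Y : Finset W) (X₁ : Finset V) (Y₁ : Finset W)
    (hXcard : 2 ≤ X.card) (hY : Y.Nonempty)
    (hX₁sub : X₁ ⊆ X) (hX₁big : (X.card : ℝ) / 2 < (X₁.card : ℝ))
    (hY₁sub : Y₁ ⊆ Y) (hY₁ne : Y₁.Nonempty)
    (hdev : ε ≤ |dens A X₁ Y₁ - dens A X Y|) :
    ∃ X₁' ⊆ X₁, X₁'.card = X.card / 2 ∧ ε ≤ |dens A X₁' Y₁ - dens A X Y| := by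
  classical
  set m := X.card / 2 with hm_def
  have hm : 0 < m := by omega
  set f : V → ℝ := fun x => (∑ y ∈ Y₁, A x y) / (Y₁.card : ℝ) with hf
  have hd : ∀ T : Finset V, dens A T Y₁ = (∑ x ∈ T, f x) / (T.card : ℝ) := by
    intro T
    simp only [_root_.dens, wSum, hf]
    rw [← Finset.sum_div, div_div, mul_comm]
  have hmle : m ≤ X₁.card := by
    have h1 : ((m : ℕ) : ℝ) ≤ (X.card : ℝ) / 2 := Nat.cast_div_le
    have : ((m : ℕ) : ℝ) < (X₁.card : ℝ) := lt_of_le_of_lt h1 hX₁big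
    exact_mod_cast this.le
  have hX₁card : X₁.card = m + (X₁.card - m) := by omega
  rcases le_abs.mp hdev with h | h
  · obtain ⟨T, hTsub, hTcard, hTavg⟩ := exists_subset_avg_ge f m hm _ X₁ hX₁card
    refine ⟨T, hTsub, hTcard, ?_⟩
    have : dens A X₁ Y₁ ≤ dens A T Y₁ := by
      rw [hd X₁, hd T, hTcard]; exact hTavg
    exact le_abs.mpr (Or.inl (by linarith))
  · obtain ⟨T, hTsub, hTcard, hTavg⟩ := exists_subset_avg_ge (fun x => -f x) m hm _ X₁ hX₁card
    refine ⟨T, hTsub, hTcard, ?_⟩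
    have : dens A T Y₁ ≤ dens A X₁ Y₁ := by
      rw [hd X₁, hd T, hTcard]
      simp only [Finset.sum_neg_distrib, neg_div, neg_le_neg_iff] at hTavg
      linarith
    exact le_abs.mpr (Or.inr (by linarith))
end

section
/- Suppose ε ∈ (0,1/2), D ≥ 8/ε², and A is a real matrix with rows indexed by a finite set V of size n and columns indexed by a finite set W of size m, with ‖A‖ = mn. Let V₁,…,V_k be pairwise disjoint subsets of V with |V_i| ≥ n/(2k) for each i, and let W₁,…,W_l be pairwise disjoint subsets of W with |W_j| ≥ m/(2l) for each j. Then the number of pairs (i,j) with |d_A(V_i,W_j)| ≥ εD is at most εkl/2. -/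
open Finset

/-- `‖A‖`: the sum of the absolute values of the entries of `A`. -/
def matNorm {V W : Type*} [Fintype V] [Fintype W] (A : V → W → ℝ) : ℝ :=
  ∑ x : V, ∑ y : W, |A x y|

/-! A block of density at least `t` in absolute value carries mass at least `t |X| |Y|` of `‖A‖`.
Dense blocks coming from disjoint row and column families are disjoint, so with `t = εD` and
`|V_i| |W_j| ≥ nm / (4kl)` there are at most `4kl / (εD) ≤ εkl / 2` of them, since `ε²D ≥ 8`. -/

open Function

section Blocks

variable {V W : Type*}

lemma abs_wSum_le (A : V → W → ℝ) (X : Finset V) (Y : Finset W) :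
    |wSum A X Y| ≤ ∑ p ∈ X ×ˢ Y, |A p.1 p.2| := by
  rw [wSum, ← sum_product']
  exact abs_sum_le_sum_abs _ _

lemma nonempty_of_pos_le_abs_dens {A : V → W → ℝ} {X : Finset V} {Y : Finset W} {t : ℝ}
    (ht : 0 < t) (h : t ≤ |dens A X Y|) : X.Nonempty ∧ Y.Nonempty := by
  constructor <;> refine nonempty_iff_ne_empty.2 fun h0 => ?_ <;>
    simp [_root_.dens, h0, not_le.2 ht] at h

lemma mul_card_mul_card_le_of_le_abs_dens {A : V → W → ℝ} {X : Finset V} {Y : Finset W} {t : ℝ}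
    (h : t ≤ |dens A X Y|) : t * ((#X : ℝ) * #Y) ≤ ∑ p ∈ X ×ˢ Y, |A p.1 p.2| := by
  obtain hc | hc := (by positivity : (0 : ℝ) ≤ #X * #Y).eq_or_lt
  · rw [← hc, mul_zero]
    exact sum_nonneg fun _ _ => abs_nonneg _
  calc t * ((#X : ℝ) * #Y) ≤ |dens A X Y| * (#X * #Y) := by gcongr
    _ = |wSum A X Y| := by rw [_root_.dens, abs_div, abs_of_pos hc, div_mul_cancel₀ _ hc.ne']
    _ ≤ _ := abs_wSum_le A X Y

lemma pairwise_disjoint_on_product {ι κ : Type*} {Vc : ι → Finset V} {Wc : κ → Finset W}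
    (hV : Pairwise (Disjoint on Vc)) (hW : Pairwise (Disjoint on Wc)) :
    Pairwise (Disjoint on fun ij : ι × κ => Vc ij.1 ×ˢ Wc ij.2) := by
  rintro ⟨i, j⟩ ⟨i', j'⟩ hne
  rw [Function.onFun, disjoint_product]
  by_cases hi : i = i'
  · subst hi
    exact Or.inr (hW fun hj => hne (congrArg _ hj))
  · exact Or.inl (hV hi)

variable [Fintype V] [Fintype W]

lemma sum_sum_abs_le_matNorm {ι : Type*} (A : V → W → ℝ) (S : Finset ι)
    (B : ι → Finset (V × W)) (hB : (S : Set ι).PairwiseDisjoint B) :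
    ∑ i ∈ S, ∑ p ∈ B i, |A p.1 p.2| ≤ matNorm A := by
  classical
  rw [← sum_biUnion hB, matNorm, ← Fintype.sum_prod_type']
  exact sum_le_univ_sum_of_nonneg fun _ => abs_nonneg _

lemma sum_dense_blocks_le_matNorm {ι κ : Type*} [Fintype ι] [Fintype κ] (A : V → W → ℝ)
    (Vc : ι → Finset V) (Wc : κ → Finset W)
    (hV : Pairwise (Disjoint on Vc)) (hW : Pairwise (Disjoint on Wc)) (t : ℝ) :
    ∑ ij ∈ univ.filter (fun ij : ι × κ => t ≤ |dens A (Vc ij.1) (Wc ij.2)|),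
      t * ((#(Vc ij.1) : ℝ) * #(Wc ij.2)) ≤ matNorm A :=
  calc _ ≤ ∑ ij ∈ univ.filter (fun ij : ι × κ => t ≤ |dens A (Vc ij.1) (Wc ij.2)|),
          ∑ p ∈ Vc ij.1 ×ˢ Wc ij.2, |A p.1 p.2| :=
        sum_le_sum fun _ hij => mul_card_mul_card_le_of_le_abs_dens (mem_filter.1 hij).2
    _ ≤ matNorm A :=
        sum_sum_abs_le_matNorm A _ _ ((pairwise_disjoint_on_product hV hW).set_pairwise _)

end Blocks

lemma le_of_mul_density_bound {s ε D N M K L : ℝ} (hs : 0 ≤ s) (hε : 0 < ε)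
    (hD : 8 / ε ^ 2 ≤ D) (hN : 0 < N) (hM : 0 < M) (hK : 0 < K) (hL : 0 < L)
    (h : s * (ε * D * (N / (2 * K) * (M / (2 * L)))) ≤ M * N) : s ≤ ε * K * L / 2 := by
  have h8 : 8 ≤ ε ^ 2 * D := by rwa [div_le_iff₀ (by positivity), mul_comm] at hD
  have h4 : s * (ε * D) ≤ 4 * K * L := by
    rw [show s * (ε * D * (N / (2 * K) * (M / (2 * L)))) = s * (ε * D) / (4 * K * L) * (M * N) by
      field_simp; ring] at h
    have := le_of_mul_le_mul_right (h.trans_eq (one_mul _).symm) (by positivity)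
    rwa [div_le_one (by positivity)] at this
  nlinarith [mul_le_mul_of_nonneg_left h8 hs]

open Classical in
theorem few_dense_blocks_general {n m k l : ℕ} (ε D : ℝ) (hε0 : 0 < ε)
    (hD : 8 / ε ^ 2 ≤ D) (A : Fin n → Fin m → ℝ)
    (hA : matNorm A = (m : ℝ) * (n : ℝ))
    (Vc : Fin k → Finset (Fin n)) (Wc : Fin l → Finset (Fin m))
    (hVdisj : ∀ i j : Fin k, i ≠ j → Disjoint (Vc i) (Vc j))
    (hWdisj : ∀ i j : Fin l, i ≠ j → Disjoint (Wc i) (Wc j))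
    (hVsize : ∀ i, (n : ℝ) / (2 * k) ≤ ((Vc i).card : ℝ))
    (hWsize : ∀ j, (m : ℝ) / (2 * l) ≤ ((Wc j).card : ℝ)) :
    ((((Finset.univ : Finset (Fin k × Fin l)).filter fun ij =>
        ε * D ≤ |dens A (Vc ij.1) (Wc ij.2)|).card : ℝ)) ≤ ε * k * l / 2 := by
  have hεD : 0 < ε * D := mul_pos hε0 ((by positivity : (0 : ℝ) < 8 / ε ^ 2).trans_le hD)
  set S := (univ : Finset (Fin k × Fin l)).filter fun ij =>
    ε * D ≤ |dens A (Vc ij.1) (Wc ij.2)|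
  rcases S.eq_empty_or_nonempty with hS | ⟨⟨i, j⟩, hij⟩
  · rw [hS, card_empty, Nat.cast_zero]
    positivity
  obtain ⟨⟨x, -⟩, ⟨y, -⟩⟩ := nonempty_of_pos_le_abs_dens hεD (mem_filter.1 hij).2
  have hblock : ∀ ij ∈ S, ε * D * ((n : ℝ) / (2 * k) * (m / (2 * l))) ≤
      ε * D * ((#(Vc ij.1) : ℝ) * #(Wc ij.2)) := fun ij _ => by
    gcongr
    exacts [hVsize _, hWsize _]
  have hmass := (card_nsmul_le_sum S _ _ hblock).trans
    ((sum_dense_blocks_le_matNorm A Vc Wc hVdisj hWdisj _).trans hA.le)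
  rw [nsmul_eq_mul] at hmass
  exact le_of_mul_density_bound (by positivity) hε0 hD (by exact_mod_cast x.pos)
    (by exact_mod_cast y.pos) (by exact_mod_cast i.pos) (by exact_mod_cast j.pos) hmass

open Classical in
/-- **Few dense blocks.**  Suppose `ε ∈ (0,1/2)`, `D ≥ 8/ε²`, and `A` is an `n × m` real
matrix with `‖A‖ = mn`.  If `V₁,…,V_k` are pairwise disjoint sets of rows with
`|V_i| ≥ n/(2k)` and `W₁,…,W_l` are pairwise disjoint sets of columns with
`|W_j| ≥ m/(2l)`, then at most `εkl/2` of the pairs `(i,j)` satisfy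
`|d_A(V_i,W_j)| ≥ εD`. -/
theorem few_dense_blocks {n m k l : ℕ} (ε D : ℝ) (hε0 : 0 < ε) (hε : ε < 1 / 2)
    (hD : 8 / ε ^ 2 ≤ D) (A : Fin n → Fin m → ℝ)
    (hA : matNorm A = (m : ℝ) * (n : ℝ))
    (Vc : Fin k → Finset (Fin n)) (Wc : Fin l → Finset (Fin m))
    (hVdisj : ∀ i j : Fin k, i ≠ j → Disjoint (Vc i) (Vc j))
    (hWdisj : ∀ i j : Fin l, i ≠ j → Disjoint (Wc i) (Wc j))
    (hVsize : ∀ i, (n : ℝ) / (2 * k) ≤ ((Vc i).card : ℝ))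
    (hWsize : ∀ j, (m : ℝ) / (2 * l) ≤ ((Wc j).card : ℝ)) :
    ((((Finset.univ : Finset (Fin k × Fin l)).filter fun ij =>
        ε * D ≤ |dens A (Vc ij.1) (Wc ij.2)|).card : ℝ)) ≤ ε * k * l / 2 :=
  few_dense_blocks_general ε D hε0 hD A hA Vc Wc hVdisj hWdisj hVsize hWsize
end

section
/- Let A be a real matrix with rows indexed by a finite set V and columns indexed by a finite set W, let X ⊆ V and Y ⊆ W, and let X = X₁ ∪ X₂ and Y = Y₁ ∪ Y₂ be partitions into nonempty parts. Writing d = d_A(X,Y) and d_{ij} = d_A(X_i,Y_j), one has Σ_{i,j∈{1,2}} d_{ij}²·|X_i||Y_j| ≥ d²·|X||Y| + (d₁₁ − d)²·|X₁||Y₁|. -/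
open Finset

/-- **Defect form of the Cauchy–Schwarz step.**  If `X = X₁ ∪ X₂` and `Y = Y₁ ∪ Y₂` are
partitions into nonempty parts, `d = d_A(X,Y)` and `d_{ij} = d_A(X_i,Y_j)`, then
`Σ_{i,j} d_{ij}²|X_i||Y_j| ≥ d²|X||Y| + (d₁₁ − d)²|X₁||Y₁|`. -/
theorem defect_cauchy_schwarz {V W : Type*} [DecidableEq V] [DecidableEq W]
    (A : V → W → ℝ) (X : Finset V) (Y : Finset W)
    (X₁ X₂ : Finset V) (Y₁ Y₂ : Finset W)
    (hXu : X₁ ∪ X₂ = X) (hXd : Disjoint X₁ X₂) (hX₁ : X₁.Nonempty) (hX₂ : X₂.Nonempty)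
    (hYu : Y₁ ∪ Y₂ = Y) (hYd : Disjoint Y₁ Y₂) (hY₁ : Y₁.Nonempty) (hY₂ : Y₂.Nonempty) :
    (dens A X Y) ^ 2 * ((X.card : ℝ) * (Y.card : ℝ)) +
      (dens A X₁ Y₁ - dens A X Y) ^ 2 * ((X₁.card : ℝ) * (Y₁.card : ℝ)) ≤
    (dens A X₁ Y₁) ^ 2 * ((X₁.card : ℝ) * (Y₁.card : ℝ)) +
      (dens A X₁ Y₂) ^ 2 * ((X₁.card : ℝ) * (Y₂.card : ℝ)) +
      (dens A X₂ Y₁) ^ 2 * ((X₂.card : ℝ) * (Y₁.card : ℝ)) +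
      (dens A X₂ Y₂) ^ 2 * ((X₂.card : ℝ) * (Y₂.card : ℝ)) := by
  have hw : wSum A X Y = wSum A X₁ Y₁ + wSum A X₁ Y₂ + wSum A X₂ Y₁ + wSum A X₂ Y₂ := by
    subst hXu hYu
    simp [wSum, Finset.sum_union hXd, Finset.sum_union hYd, Finset.sum_add_distrib]
    ring
  have hcX : (X.card : ℝ) = X₁.card + X₂.card := by
    subst hXu
    rw [Finset.card_union_of_disjoint hXd]; push_cast; ring
  have hcY : (Y.card : ℝ) = Y₁.card + Y₂.card := by
    subst hYu
    rw [Finset.card_union_of_disjoint hYd]; push_cast; ring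
  have hx1 : (0:ℝ) < X₁.card := by exact_mod_cast Finset.card_pos.2 hX₁
  have hx2 : (0:ℝ) < X₂.card := by exact_mod_cast Finset.card_pos.2 hX₂
  have hy1 : (0:ℝ) < Y₁.card := by exact_mod_cast Finset.card_pos.2 hY₁
  have hy2 : (0:ℝ) < Y₂.card := by exact_mod_cast Finset.card_pos.2 hY₂
  have hd : ∀ (P : Finset V) (Q : Finset W), (0:ℝ) < P.card → (0:ℝ) < Q.card →
      dens A P Q * ((P.card : ℝ) * Q.card) = wSum A P Q := by
    intro P Q hP hQ
    rw [show dens A P Q = wSum A P Q / ((P.card : ℝ) * Q.card) from rfl, div_mul_cancel₀]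
    positivity
  have hX0 : (0:ℝ) < X.card := by rw [hcX]; linarith
  have hY0 : (0:ℝ) < Y.card := by rw [hcY]; linarith
  have h11 := hd X₁ Y₁ hx1 hy1
  have h12 := hd X₁ Y₂ hx1 hy2
  have h21 := hd X₂ Y₁ hx2 hy1
  have h22 := hd X₂ Y₂ hx2 hy2
  have h := hd X Y hX0 hY0
  rw [hw, hcX, hcY] at h
  set d := dens A X Y
  set d11 := dens A X₁ Y₁
  set d12 := dens A X₁ Y₂
  set d21 := dens A X₂ Y₁
  set d22 := dens A X₂ Y₂
  have key : (d11 - d)^2 * ((X₁.card:ℝ) * Y₁.card) + (d12 - d)^2 * ((X₁.card:ℝ) * Y₂.card)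
      + (d21 - d)^2 * ((X₂.card:ℝ) * Y₁.card) + (d22 - d)^2 * ((X₂.card:ℝ) * Y₂.card)
      = d11^2 * ((X₁.card:ℝ) * Y₁.card) + d12^2 * ((X₁.card:ℝ) * Y₂.card)
      + d21^2 * ((X₂.card:ℝ) * Y₁.card) + d22^2 * ((X₂.card:ℝ) * Y₂.card)
      - d^2 * (((X₁.card:ℝ) + X₂.card) * ((Y₁.card:ℝ) + Y₂.card)) := by
    linear_combination (-2*d)*h11 + (-2*d)*h12 + (-2*d)*h21 + (-2*d)*h22 + (2*d)*h
  rw [hcX, hcY]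
  nlinarith [mul_nonneg (mul_nonneg (sq_nonneg (d12 - d)) hx1.le) hy2.le,
    mul_nonneg (mul_nonneg (sq_nonneg (d21 - d)) hx2.le) hy1.le,
    mul_nonneg (mul_nonneg (sq_nonneg (d22 - d)) hx2.le) hy2.le, key]
end
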